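/- arXiv:1708.08096 — 2 statements merged into one kernel-verified Lean document; each statement's English description precedes it below -/
import Mathlib

section
/- For every integer n ≥ 1 and every odd k with 1 ≤ k ≤ n, the coefficient of x^{n-k} in the Euler polynomial E_n(x) equals -C(n,k) · Σ_{j=0}^{k} (-1)^j S(k+1, j+1) · j!/2^j, where S denotes Stirling numbers of the second kind. -/
/-!
`E_n` is an Appell sequence: the coefficient of `x^j` in `E_n(x)` is `C(n,j) E_{n-j}(0)`. The
constants `E_m(0)` are determined by `E_0(0) = 1` and `2 E_m(0) + ∑_{i<m} C(m,i) E_i(0) = 0`, and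
the binomial recurrence `S(m+1,j+1) = ∑_i C(m,i) S(i,j)` shows that the values at `-1/2` of the
Fubini polynomials `F_m(x) = ∑_j S(m,j) j! x^j` satisfy the same recursion, so
`E_m(0) = F_m(-1/2)`. Finally the triangle recurrence for `S(k+1,j+1)` turns the sum in the
statement into `-F_k(-1/2)`.
-/

open Polynomial Finset

/-- Euler polynomials `E n`, defined by the recursion
`E n = X^n - (1/2) * ∑_{k<n} (n choose k) • E k`, equivalent to the
generating function `2 e^{xt}/(e^t + 1) = ∑ E_n(x) t^n/n!`. -/
noncomputable def eulerPoly : ℕ → Polynomial ℚ :=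
  WellFounded.fix Nat.lt_wfRel.wf fun n E =>
    Polynomial.X ^ n - (2⁻¹ : ℚ) • ∑ k : Fin n, ((n.choose k : ℚ)) • E k k.2

/-- Stirling numbers of the second kind. -/
def stirlingS2 : ℕ → ℕ → ℕ
  | 0, 0 => 1
  | 0, _ + 1 => 0
  | _ + 1, 0 => 0
  | n + 1, k + 1 => stirlingS2 n k + (k + 1) * stirlingS2 n (k + 1)

open Nat

theorem stirlingS2_eq_stirlingSecond : stirlingS2 = Nat.stirlingSecond := by
  funext n k
  induction n generalizing k with
  | zero => cases k <;> rfl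
  | succ n ih =>
    cases k with
    | zero => rfl
    | succ k => rw [stirlingS2, stirlingSecond_succ_succ, ih, ih, add_comm]

theorem Nat.stirlingSecond_succ_succ_eq_sum (n k : ℕ) :
    stirlingSecond (n + 1) (k + 1) = ∑ m ∈ range (n + 1), n.choose m * stirlingSecond m k := by
  induction n generalizing k with
  | zero => cases k <;> simp [stirlingSecond_succ_succ]
  | succ n ih =>
    have shifted : ∑ m ∈ range (n + 1), n.choose m * stirlingSecond (m + 1) k
        = k * ∑ m ∈ range (n + 1), n.choose m * stirlingSecond m k
          + stirlingSecond (n + 1) k := by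
      cases k with
      | zero => simp
      | succ k =>
        have split : ∀ m, n.choose m * stirlingSecond (m + 1) (k + 1)
            = (k + 1) * (n.choose m * stirlingSecond m (k + 1)) + n.choose m * stirlingSecond m k :=
          fun m => by rw [stirlingSecond_succ_succ]; ring
        simp only [split, sum_add_distrib, ← mul_sum, ← ih]
    have unshifted := sum_range_succ' (fun m => n.choose m * stirlingSecond m k) (n + 1)
    rw [sum_range_succ, choose_succ_self, zero_mul, add_zero, choose_zero_right, one_mul]
      at unshifted
    rw [sum_range_succ', stirlingSecond_succ_succ, ih]
    simp only [choose_succ_succ', add_mul, sum_add_distrib, choose_zero_right, one_mul]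
    rw [shifted]
    linarith

theorem Nat.sum_range_choose_mul_stirlingSecond (n k : ℕ) :
    ∑ m ∈ range n, n.choose m * stirlingSecond m k = (k + 1) * stirlingSecond n (k + 1) := by
  have h := stirlingSecond_succ_succ_eq_sum n k
  rw [sum_range_succ, choose_self, one_mul, stirlingSecond_succ_succ] at h
  omega

theorem Nat.stirlingSecond_zero_right {n : ℕ} (hn : n ≠ 0) : stirlingSecond n 0 = 0 := by
  obtain ⟨n, rfl⟩ := exists_eq_succ_of_ne_zero hn
  rfl

section Fubini

variable {R : Type*} [CommSemiring R]

-- The Fubini (ordered Bell) polynomial `F_n`, evaluated at `x`.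
def fubini (n : ℕ) (x : R) : R :=
  ∑ j ∈ range (n + 1), ((stirlingSecond n j * j ! : ℕ) : R) * x ^ j

theorem fubini_eq_sum_range_of_lt {n N : ℕ} (h : n < N) (x : R) :
    fubini n x = ∑ j ∈ range N, ((stirlingSecond n j * j ! : ℕ) : R) * x ^ j :=
  sum_subset (range_subset_range.2 h) fun j _ hj => by
    rw [stirlingSecond_eq_zero_of_lt (by simpa using hj), zero_mul, Nat.cast_zero, zero_mul]

theorem fubini_zero (x : R) : fubini 0 x = 1 := by
  simp [fubini]

theorem fubini_eq_sum_range_succ_of_le {n N : ℕ} (hn : n ≠ 0) (h : n ≤ N) (x : R) :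
    fubini n x
      = ∑ j ∈ range N, ((stirlingSecond n (j + 1) * (j + 1)! : ℕ) : R) * x ^ (j + 1) := by
  rw [fubini_eq_sum_range_of_lt (lt_succ_of_le h), sum_range_succ', stirlingSecond_zero_right hn,
    zero_mul, Nat.cast_zero, zero_mul, add_zero]

theorem fubini_eq_mul_sum {n : ℕ} (hn : n ≠ 0) (x : R) :
    fubini n x = x * ∑ m ∈ range n, (n.choose m : R) * fubini m x := by
  have coeff_sum : ∀ j, ∑ m ∈ range n, n.choose m * (stirlingSecond m j * j !)
      = stirlingSecond n (j + 1) * (j + 1)! := fun j => by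
    simp only [← mul_assoc, ← sum_mul, sum_range_choose_mul_stirlingSecond, factorial_succ]
    ring
  calc fubini n x
      = ∑ j ∈ range n, ((stirlingSecond n (j + 1) * (j + 1)! : ℕ) : R) * x ^ (j + 1) :=
        fubini_eq_sum_range_succ_of_le hn le_rfl x
    _ = x * ∑ j ∈ range n, ∑ m ∈ range n,
          (n.choose m : R) * (((stirlingSecond m j * j ! : ℕ) : R) * x ^ j) := by
        simp only [mul_sum, ← coeff_sum, Nat.cast_sum, sum_mul]
        refine sum_congr rfl fun j _ => sum_congr rfl fun m _ => ?_
        push_cast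
        ring
    _ = x * ∑ m ∈ range n, (n.choose m : R) * fubini m x := by
        rw [sum_comm]
        refine congrArg _ (sum_congr rfl fun m hm => ?_)
        rw [fubini_eq_sum_range_of_lt (mem_range.1 hm), mul_sum]

theorem mul_sum_stirlingSecond_succ_succ {k : ℕ} (hk : k ≠ 0) (x : R) :
    x * ∑ j ∈ range (k + 1), ((stirlingSecond (k + 1) (j + 1) * j ! : ℕ) : R) * x ^ j
      = (1 + x) * fubini k x := by
  have split : ∀ j, ((stirlingSecond (k + 1) (j + 1) * j ! : ℕ) : R) * x ^ (j + 1)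
      = ((stirlingSecond k (j + 1) * (j + 1)! : ℕ) : R) * x ^ (j + 1)
        + x * (((stirlingSecond k j * j ! : ℕ) : R) * x ^ j) := fun j => by
    rw [stirlingSecond_succ_succ, factorial_succ]
    push_cast
    ring
  rw [mul_sum, add_mul, one_mul]
  nth_rw 1 [fubini_eq_sum_range_succ_of_le hk (le_succ k) x]
  rw [fubini, mul_sum, ← sum_add_distrib]
  exact sum_congr rfl fun j _ => by rw [← split]; ring

end Fubini

theorem Finset.sum_range_choose_mul_choose_mul {R : Type*} [CommSemiring R] (f : ℕ → R)
    (n j : ℕ) :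
    ∑ m ∈ range n, (n.choose m : R) * (m.choose j * f (m - j))
      = n.choose j * ∑ i ∈ range (n - j), ((n - j).choose i : R) * f i := by
  rcases lt_or_ge n j with hnj | hjn
  · rw [choose_eq_zero_of_lt hnj, Nat.cast_zero, zero_mul]
    exact sum_eq_zero fun m hm => by
      rw [choose_eq_zero_of_lt ((mem_range.1 hm).trans hnj), Nat.cast_zero, zero_mul, mul_zero]
  obtain ⟨d, rfl⟩ := exists_add_of_le hjn
  rw [sum_range_add, sum_eq_zero fun m hm => by rw [choose_eq_zero_of_lt (mem_range.1 hm)]; simp,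
    zero_add, Nat.add_sub_cancel_left, mul_sum]
  refine sum_congr rfl fun i _ => ?_
  have h := choose_mul (n := j + d) (le_add_right j i)
  rw [Nat.add_sub_cancel_left, Nat.add_sub_cancel_left] at h
  rw [Nat.add_sub_cancel_left, ← mul_assoc, ← Nat.cast_mul, h, Nat.cast_mul, mul_assoc]

theorem eulerPoly_eq (n : ℕ) :
    eulerPoly n
      = X ^ n - (2⁻¹ : ℚ) • ∑ m ∈ range n, (n.choose m : ℚ) • eulerPoly m := by
  rw [← Fin.sum_univ_eq_sum_range (fun m => (n.choose m : ℚ) • eulerPoly m)]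
  exact WellFounded.fix_eq _ _ n

theorem eulerPoly_zero : eulerPoly 0 = 1 := by
  simp [eulerPoly_eq 0]

theorem sum_range_choose_mul_eulerPoly_coeff_zero {n : ℕ} (hn : n ≠ 0) :
    ∑ m ∈ range n, (n.choose m : ℚ) * (eulerPoly m).coeff 0 = -2 * (eulerPoly n).coeff 0 := by
  have h := congrArg (coeff · 0) (eulerPoly_eq n)
  simp only [coeff_sub, coeff_smul, finsetSum_coeff, coeff_X_pow, if_neg hn.symm, smul_eq_mul] at h
  linarith

theorem eulerPoly_coeff (n j : ℕ) :
    (eulerPoly n).coeff j = n.choose j * (eulerPoly (n - j)).coeff 0 := by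
  induction n using Nat.strong_induction_on with
  | _ n ih =>
  rw [eulerPoly_eq, coeff_sub, coeff_smul, finsetSum_coeff, coeff_X_pow]
  simp only [coeff_smul, smul_eq_mul]
  rw [sum_congr rfl fun m hm => by rw [ih m (mem_range.1 hm)],
    sum_range_choose_mul_choose_mul (fun i => (eulerPoly i).coeff 0)]
  rcases lt_trichotomy j n with hjn | rfl | hnj
  · rw [sum_range_choose_mul_eulerPoly_coeff_zero (by omega), if_neg hjn.ne]
    ring
  · simp [eulerPoly_zero]
  · simp [hnj.ne', choose_eq_zero_of_lt hnj]

theorem eulerPoly_coeff_zero_eq_fubini (n : ℕ) :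
    (eulerPoly n).coeff 0 = fubini n (-2⁻¹ : ℚ) := by
  induction n using Nat.strong_induction_on with
  | _ n ih =>
  rcases eq_or_ne n 0 with rfl | hn
  · rw [eulerPoly_zero, fubini_zero, coeff_one_zero]
  have ih_sum : ∑ m ∈ range n, (n.choose m : ℚ) * fubini m (-2⁻¹)
      = ∑ m ∈ range n, (n.choose m : ℚ) * (eulerPoly m).coeff 0 :=
    sum_congr rfl fun m hm => by rw [ih m (mem_range.1 hm)]
  rw [fubini_eq_mul_sum hn, ih_sum, sum_range_choose_mul_eulerPoly_coeff_zero hn]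
  ring

theorem stmt_6_general (n k : ℕ) (hk1 : 1 ≤ k) (hkn : k ≤ n) :
    (eulerPoly n).coeff (n - k) =
      -(n.choose k : ℚ) *
        ∑ j ∈ Finset.range (k + 1),
          (-1 : ℚ) ^ j * stirlingS2 (k + 1) (j + 1) * (j.factorial : ℚ) / 2 ^ j := by
  have hsum := mul_sum_stirlingSecond_succ_succ (by omega : k ≠ 0) (-2⁻¹ : ℚ)
  have term : ∀ j, (-1 : ℚ) ^ j * stirlingS2 (k + 1) (j + 1) * (j.factorial : ℚ) / 2 ^ j
      = ((stirlingSecond (k + 1) (j + 1) * j ! : ℕ) : ℚ) * (-2⁻¹) ^ j := fun j => by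
    rw [stirlingS2_eq_stirlingSecond, show (-2⁻¹ : ℚ) = -1 / 2 by norm_num, div_pow]
    push_cast
    ring
  rw [eulerPoly_coeff, choose_symm hkn, Nat.sub_sub_self hkn, eulerPoly_coeff_zero_eq_fubini,
    sum_congr rfl fun j _ => term j]
  linear_combination (-2 * n.choose k : ℚ) * hsum

theorem stmt_6 (n k : ℕ) (hn : 1 ≤ n) (hk : Odd k) (hk1 : 1 ≤ k) (hkn : k ≤ n) :
    (eulerPoly n).coeff (n - k) =
      -(n.choose k : ℚ) *
        ∑ j ∈ Finset.range (k + 1),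
          (-1 : ℚ) ^ j * stirlingS2 (k + 1) (j + 1) * (j.factorial : ℚ) / 2 ^ j :=
  stmt_6_general n k hk1 hkn
end

section
/- For every odd integer k ≥ 1 and every n ≥ k, the sign of the coefficient e_k(n) of x^{n-k} in the Euler polynomial E_n(x) is (-1)^{(k+1)/2}. -/
/-!
The coefficient of `x^(n-k)` in `E_n` is `(n choose k) E_k(0)`, so only the sign of `E_k(0)`
matters. The exponential generating function `A = ∑ E_n(0) tⁿ/n!` equals `2/(eᵗ + 1)`, hence
satisfies the Riccati equation `2A' = A² - 2A`, i.e. the quadratic recurrence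
`2 E_{m+2}(0) = ∑_{i<m} (m+1 choose i+1) E_{i+1}(0) E_{m-i}(0)`. By strong induction `E_j(0)`
vanishes for even `j > 0`, and for odd `j` every surviving term of the recurrence is a product of
two odd-index values whose signs multiply to `(-1)^((j+1)/2)`; the term `i = 0` is nonzero.
-/

open Polynomial Finset

open Nat

namespace PowerSeries

variable {K : Type*} [Field K]

noncomputable def egf (f : ℕ → K) : K⟦X⟧ := mk fun n => f n / n !

@[simp]
theorem coeff_egf (f : ℕ → K) (n : ℕ) : coeff n (egf f) = f n / n ! := coeff_mk _ _

theorem exp_eq_egf_one [CharZero K] : exp K = egf 1 := by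
  ext n
  simp

theorem egf_mul_egf [CharZero K] (f g : ℕ → K) :
    egf f * egf g = egf fun n => ∑ k ∈ range (n + 1), (n.choose k : K) * f k * g (n - k) := by
  ext n
  rw [coeff_mul, Finset.Nat.sum_antidiagonal_eq_sum_range_succ_mk, coeff_egf, sum_div]
  refine sum_congr rfl fun k hk => ?_
  rw [coeff_egf, coeff_egf, Nat.cast_choose K (Nat.le_of_lt_succ (mem_range.mp hk))]
  have : (n ! : K) ≠ 0 := Nat.cast_ne_zero.mpr n.factorial_ne_zero
  field_simp

theorem derivative_egf [CharZero K] (f : ℕ → K) : d⁄dX K (egf f) = egf fun n => f (n + 1) := by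
  ext n
  rw [coeff_derivative, coeff_egf, coeff_egf, Nat.factorial_succ, Nat.cast_mul]
  field_simp
  push_cast
  ring

end PowerSeries

theorem eulerPoly_def (n : ℕ) :
    eulerPoly n = X ^ n - (2⁻¹ : ℚ) • ∑ k ∈ range n, (n.choose k : ℚ) • eulerPoly k := by
  rw [← Fin.sum_univ_eq_sum_range fun k => (n.choose k : ℚ) • eulerPoly k]
  exact WellFounded.fix_eq _ _ n

theorem coeff_eulerPoly_rec (n j : ℕ) :
    (eulerPoly n).coeff j =
      (if j = n then 1 else 0) - 2⁻¹ * ∑ k ∈ range n, (n.choose k : ℚ) * (eulerPoly k).coeff j := by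
  rw [eulerPoly_def, coeff_sub, coeff_X_pow, coeff_smul, finsetSum_coeff]
  simp only [coeff_smul, smul_eq_mul]

noncomputable def eulerAtZero (n : ℕ) : ℚ := (eulerPoly n).coeff 0

theorem eulerAtZero_rec (n : ℕ) :
    eulerAtZero n =
      (if n = 0 then 1 else 0) - 2⁻¹ * ∑ k ∈ range n, (n.choose k : ℚ) * eulerAtZero k := by
  rw [eulerAtZero, coeff_eulerPoly_rec]
  simp only [eq_comm (a := 0), eulerAtZero]

@[simp]
theorem eulerAtZero_zero : eulerAtZero 0 = 1 := by
  simp [eulerAtZero_rec 0]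

theorem eulerAtZero_one : eulerAtZero 1 = -2⁻¹ := by
  simp [eulerAtZero_rec 1]

theorem coeff_eulerPoly (n j : ℕ) : (eulerPoly n).coeff j = n.choose j * eulerAtZero (n - j) := by
  induction n using Nat.strong_induction_on generalizing j with
  | _ n ih =>
  rw [coeff_eulerPoly_rec, sum_congr rfl fun k hk => by rw [ih k (mem_range.mp hk)]]
  rcases lt_or_ge j n with hjn | hnj
  · obtain ⟨m, rfl⟩ : ∃ m, n = j + m := ⟨n - j, by omega⟩
    have hterm (i : ℕ) (hi : i ∈ range m) : ((j + m).choose (j + i) : ℚ) *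
        ((j + i).choose j * eulerAtZero (j + i - j)) =
        (j + m).choose j * ((m.choose i) * eulerAtZero i) := by
      have := Nat.choose_mul (n := j + m) (Nat.le_add_right j i)
      simp only [Nat.add_sub_cancel_left] at this ⊢
      rw [← mul_assoc, ← Nat.cast_mul, this]
      push_cast
      ring
    rw [sum_range_add, sum_eq_zero fun k hk => by
      rw [Nat.choose_eq_zero_of_lt (mem_range.mp hk)]; simp, sum_congr rfl hterm, ← mul_sum,
      Nat.add_sub_cancel_left, eulerAtZero_rec m, if_neg (by omega), if_neg (by omega)]
    ring
  · rw [sum_eq_zero fun k hk => by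
      rw [Nat.choose_eq_zero_of_lt ((mem_range.mp hk).trans_le hnj)]; simp]
    rcases hnj.eq_or_lt with rfl | hnj
    · simp
    · simp [hnj.ne', Nat.choose_eq_zero_of_lt hnj]

theorem sum_choose_mul_eulerAtZero_add (n : ℕ) :
    ∑ k ∈ range (n + 1), (n.choose k : ℚ) * eulerAtZero k + eulerAtZero n =
      if n = 0 then 2 else 0 := by
  rw [sum_range_succ, Nat.choose_self, Nat.cast_one, one_mul]
  nth_rw 2 [eulerAtZero_rec n]; nth_rw 1 [eulerAtZero_rec n]
  split_ifs <;> ring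

open PowerSeries

theorem egf_eulerAtZero_mul_exp_add_one : egf eulerAtZero * (exp ℚ + 1) = 2 := by
  ext n
  rw [mul_add, mul_one, show exp ℚ = egf 1 from exp_eq_egf_one, egf_mul_egf, map_add, coeff_egf,
    coeff_egf, ← add_div]
  simp only [Pi.one_apply, mul_one, sum_choose_mul_eulerAtZero_add]
  rw [← map_ofNat PowerSeries.C 2, PowerSeries.coeff_C]
  split_ifs <;> simp_all

theorem two_mul_derivative_egf_eulerAtZero :
    2 * d⁄dX ℚ (egf eulerAtZero) = egf eulerAtZero ^ 2 - 2 * egf eulerAtZero := by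
  set A := egf eulerAtZero
  have hd : d⁄dX ℚ A * (exp ℚ + 1) + A * exp ℚ = 0 := by
    have := congrArg (d⁄dX ℚ) egf_eulerAtZero_mul_exp_add_one
    rwa [show (2 : ℚ⟦X⟧) = ((2 : ℕ) : ℚ⟦X⟧) by norm_num, Derivation.map_natCast, Derivation.leibniz,
      map_add, derivative_exp, Derivation.map_one_eq_zero, smul_eq_mul, smul_eq_mul, add_zero,
      add_comm, mul_comm] at this
  linear_combination (-d⁄dX ℚ A - A) * egf_eulerAtZero_mul_exp_add_one + A * hd

theorem two_mul_eulerAtZero_add_two (m : ℕ) :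
    2 * eulerAtZero (m + 2) =
      ∑ i ∈ range m, ((m + 1).choose (i + 1) : ℚ) * eulerAtZero (i + 1) * eulerAtZero (m - i) := by
  have h := congrArg (PowerSeries.coeff (m + 1)) two_mul_derivative_egf_eulerAtZero
  rw [← map_ofNat PowerSeries.C 2, map_sub, PowerSeries.coeff_C_mul, PowerSeries.coeff_C_mul,
    derivative_egf, pow_two, egf_mul_egf, coeff_egf, coeff_egf, coeff_egf, sum_range_succ,
    sum_range_succ'] at h
  have : ((m + 1) ! : ℚ) ≠ 0 := Nat.cast_ne_zero.mpr (m + 1).factorial_ne_zero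
  field_simp at h
  simp only [Nat.choose_self, Nat.choose_zero_right, Nat.sub_self, Nat.sub_zero, eulerAtZero_zero,
    Nat.succ_sub_succ] at h
  push_cast at h
  linarith

theorem eulerAtZero_eq_zero_of_even {j : ℕ} (hj : Even j) (hj0 : j ≠ 0) : eulerAtZero j = 0 := by
  induction j using Nat.strong_induction_on with
  | _ j ih =>
  obtain ⟨m, rfl⟩ : ∃ m, j = m + 2 := ⟨j - 2, by obtain ⟨t, ht⟩ := hj; omega⟩
  have hm : Even m := by simpa [Nat.even_add] using hj
  have hterm (i : ℕ) (hi : i ∈ range m) : eulerAtZero (i + 1) * eulerAtZero (m - i) = 0 := by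
    have hi := mem_range.mp hi
    rcases Nat.even_or_odd i with hi2 | hi2
    · rw [ih (m - i) (by omega) (hm.tsub hi2) (by omega), mul_zero]
    · rw [ih (i + 1) (by omega) hi2.add_one (by omega), zero_mul]
  have := two_mul_eulerAtZero_add_two m
  rw [sum_eq_zero fun i hi => by rw [mul_assoc, hterm i hi, mul_zero]] at this
  linarith

theorem sign_mul_eulerAtZero_pos {j : ℕ} (hj : Odd j) :
    0 < (-1 : ℚ) ^ ((j + 1) / 2) * eulerAtZero j := by
  induction j using Nat.strong_induction_on with
  | _ j ih =>
  obtain rfl | ⟨m, rfl⟩ : j = 1 ∨ ∃ m, j = m + 2 := by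
    obtain ⟨t, rfl⟩ := hj; rcases t with _ | t; · simp
    exact Or.inr ⟨2 * t + 1, by ring⟩
  · norm_num [eulerAtZero_one]
  have hm : Odd m := by simpa [Nat.odd_add] using hj
  have hterm (i : ℕ) (hi : i < m) (hi2 : Even i) :
      0 < (-1 : ℚ) ^ ((m + 3) / 2) *
        (((m + 1).choose (i + 1) : ℚ) * eulerAtZero (i + 1) * eulerAtZero (m - i)) := by
    have hexp : (m + 3) / 2 = (i + 1 + 1) / 2 + (m - i + 1) / 2 := by
      obtain ⟨p, rfl⟩ := hi2; obtain ⟨q, rfl⟩ := hm; omega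
    have hchoose : (0 : ℚ) < (m + 1).choose (i + 1) := by exact_mod_cast Nat.choose_pos (by omega)
    have h1 := ih (i + 1) (by omega) hi2.add_one
    have h2 := ih (m - i) (by omega) (Nat.Odd.sub_even hi.le hm hi2)
    rw [hexp, pow_add]
    calc (0 : ℚ) < _ := mul_pos hchoose (mul_pos h1 h2)
      _ = _ := by ring
  have hsum : 0 < ∑ i ∈ range m, (-1 : ℚ) ^ ((m + 3) / 2) *
      (((m + 1).choose (i + 1) : ℚ) * eulerAtZero (i + 1) * eulerAtZero (m - i)) := by
    refine sum_pos' (fun i hi => ?_) ⟨0, mem_range.mpr hm.pos, hterm 0 hm.pos .zero⟩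
    rcases Nat.even_or_odd i with hi2 | hi2
    · exact (hterm i (mem_range.mp hi) hi2).le
    · rw [eulerAtZero_eq_zero_of_even hi2.add_one (by omega)]
      simp
  rw [← mul_sum, ← two_mul_eulerAtZero_add_two] at hsum
  linarith

theorem stmt_9_general (k : ℕ) (hk : Odd k) (n : ℕ) (hkn : k ≤ n) :
    0 < (-1 : ℚ) ^ ((k + 1) / 2) * (eulerPoly n).coeff (n - k) := by
  rw [coeff_eulerPoly, Nat.sub_sub_self hkn, Nat.choose_symm hkn, mul_left_comm]
  have hchoose : (0 : ℚ) < n.choose k := by exact_mod_cast Nat.choose_pos hkn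
  exact mul_pos hchoose (sign_mul_eulerAtZero_pos hk)

theorem stmt_9 (k : ℕ) (hk : Odd k) (hk1 : 1 ≤ k) (n : ℕ) (hkn : k ≤ n) :
    0 < (-1 : ℚ) ^ ((k + 1) / 2) * (eulerPoly n).coeff (n - k) :=
  stmt_9_general k hk n hkn
end
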